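/- For positive reals p ≠ q and 1 ≤ k ≤ n, the (p,q)-binomial coefficients satisfy [n+1 choose k]_{p,q} = p^k [n choose k]_{p,q} + p^{n+1-k} [n choose k-1]_{p,q} - (p^n - q^n) [n-1 choose k-1]_{p,q}. -/

import Mathlib

/-!
Writing `[j] = (p^j - q^j)/(p - q)`, the right-hand side differs from the Pascal rule
`[n+1 choose k] = q^k [n choose k] + p^(n+1-k) [n choose k-1]` by
`(p^k - q^k) [n choose k] - (p^n - q^n) [n-1 choose k-1]`, which vanishes by the absorption
identity `[k] [n choose k] = [n] [n-1 choose k-1]`.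
-/

noncomputable def pqFact (p q : ℝ) (n : ℕ) : ℝ :=
  ∏ j ∈ Finset.range n, (p ^ (j + 1) - q ^ (j + 1)) / (p - q)

noncomputable def pqBinom (p q : ℝ) (n k : ℕ) : ℝ :=
  pqFact p q n / (pqFact p q k * pqFact p q (n - k))

lemma pqFact_succ (p q : ℝ) (n : ℕ) :
    pqFact p q (n + 1) = pqFact p q n * ((p ^ (n + 1) - q ^ (n + 1)) / (p - q)) :=
  Finset.prod_range_succ _ n

section Nondegenerate

variable {p q : ℝ} (hp : 0 ≤ p) (hq : 0 ≤ q) (hpq : p ≠ q)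
include hp hq hpq

lemma pow_succ_sub_pow_succ_ne_zero (j : ℕ) : p ^ (j + 1) - q ^ (j + 1) ≠ 0 :=
  sub_ne_zero.mpr fun h => hpq ((pow_left_inj₀ hp hq j.succ_ne_zero).mp h)

lemma pqFact_ne_zero (n : ℕ) : pqFact p q n ≠ 0 :=
  Finset.prod_ne_zero_iff.mpr fun j _ =>
    div_ne_zero (pow_succ_sub_pow_succ_ne_zero hp hq hpq j) (sub_ne_zero.mpr hpq)

lemma pqBinom_succ_succ_mul (n k : ℕ) :
    (p ^ (k + 1) - q ^ (k + 1)) * pqBinom p q (n + 1) (k + 1) =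
      (p ^ (n + 1) - q ^ (n + 1)) * pqBinom p q n k := by
  have hF := pqFact_ne_zero hp hq hpq
  have hk := pow_succ_sub_pow_succ_ne_zero hp hq hpq k
  have hd : p - q ≠ 0 := sub_ne_zero.mpr hpq
  unfold pqBinom
  rw [Nat.add_sub_add_right, pqFact_succ p q n, pqFact_succ p q k]
  field_simp

-- `k < n` is needed: `pqBinom p q n (n + 1)` is a junk value, not `0`.
lemma pqBinom_succ_succ {n k : ℕ} (hkn : k < n) :
    pqBinom p q (n + 1) (k + 1) =
      q ^ (k + 1) * pqBinom p q n (k + 1) + p ^ (n - k) * pqBinom p q n k := by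
  obtain ⟨m, rfl⟩ : ∃ m, n = k + 1 + m := ⟨n - (k + 1), by omega⟩
  have hF := pqFact_ne_zero hp hq hpq
  have hk := pow_succ_sub_pow_succ_ne_zero hp hq hpq k
  have hm := pow_succ_sub_pow_succ_ne_zero hp hq hpq m
  have hd : p - q ≠ 0 := sub_ne_zero.mpr hpq
  have hlen : k + 1 + m - k = m + 1 := by omega
  unfold pqBinom
  rw [Nat.add_sub_add_right, Nat.add_sub_cancel_left, hlen, pqFact_succ p q (k + 1 + m),
    pqFact_succ p q k, pqFact_succ p q m]
  -- `p^(N+1) - q^(N+1) = q^(k+1) (p^(m+1) - q^(m+1)) + p^(m+1) (p^(k+1) - q^(k+1))`, `N = k + 1 + m`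
  field_simp
  ring

end Nondegenerate

theorem pqBinom_pascal3 (p q : ℝ) (hp : 0 < p) (hq : 0 < q) (hne : p ≠ q)
    (n k : ℕ) (hk1 : 1 ≤ k) (hkn : k ≤ n) :
    pqBinom p q (n + 1) k =
      p ^ k * pqBinom p q n k + p ^ (n + 1 - k) * pqBinom p q n (k - 1)
        - (p ^ n - q ^ n) * pqBinom p q (n - 1) (k - 1) := by
  obtain ⟨k, rfl⟩ : ∃ k', k = k' + 1 := ⟨k - 1, by omega⟩
  obtain ⟨n, rfl⟩ : ∃ n', n = n' + 1 := ⟨n - 1, by omega⟩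
  have pascal := pqBinom_succ_succ hp.le hq.le hne (show k < n + 1 by omega)
  have absorption := pqBinom_succ_succ_mul hp.le hq.le hne n k
  rw [Nat.add_sub_add_right, Nat.add_sub_cancel, Nat.add_sub_cancel]
  linear_combination pascal - absorption
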